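/- arXiv:1704.04956 — 2 statements merged into one kernel-verified Lean document; each statement's English description precedes it below -/
import Mathlib

section
/- Let Y = {(x,y) ∈ ℝ² : (x/a)² + y² = 1} be an ellipse with a > 1, and let h : Y → Y be the map sending each point p ∈ Y to the unique point of intersection of the line normal to Y at p with Y ∖ {p}. Then h is bijective if and only if 1 < a ≤ √2. -/
open Filter Topology Metric

noncomputable section

/-! ### The ellipse -/

/-- The point `(x, y)` of the Euclidean plane. -/
def pt2 (x y : ℝ) : EuclideanSpace ℝ (Fin 2) := (WithLp.equiv 2 (Fin 2 → ℝ)).symm ![x, y]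

/-- The ellipse `{(x,y) : (x/a)² + y² = 1}` in the Euclidean plane. -/
def ellipse (a : ℝ) : Set (EuclideanSpace ℝ (Fin 2)) :=
  {p | (p 0 / a) ^ 2 + (p 1) ^ 2 = 1}

/-- `r₁ = 4√3·a/(a²+3)`. -/
def ellipseR1 (a : ℝ) : ℝ := 4 * Real.sqrt 3 * a / (a ^ 2 + 3)

/-- `r₂ = 4√3·a²/(3a²+1)`. -/
def ellipseR2 (a : ℝ) : ℝ := 4 * Real.sqrt 3 * a ^ 2 / (3 * a ^ 2 + 1)

/-- A direction vector of the line normal to the ellipse `(x/a)² + y² = 1` at the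
point `p` (proportional to the gradient `(2x/a², 2y)` at `p`). -/
def normalDir (a : ℝ) (p : EuclideanSpace ℝ (Fin 2)) : EuclideanSpace ℝ (Fin 2) :=
  pt2 (p 0 / a ^ 2) (p 1)

/-!
The normal line at `p = (x, y)` is `t ↦ p + t • (x / a², y)`. Substituting into the equation of
the ellipse leaves, besides `t = 0`, the root `t = -2a²(1 + (a² - 1)y²) / D(y)` with
`D(y) = 1 + (a⁴ - 1)y²`, so the normal map is `(x, y) ↦ (x · s(y), g(y))` where
`s(y) = ((a² - 1)²y² - 1) / D(y)` and `g(y) = y(1 - 2a² - (a² - 1)²y²) / D(y)`.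

Since `g(±1) = ∓1`, the intermediate value theorem makes the map surjective for every `a > 1`.
If `a² ≤ 2`, then `g` is injective on `[-1, 1]` and `s < 0` on `(-1, 1)`, so the map is
injective. If `a² > 2`, then `s` vanishes at the height `y₀ = 1 / (a² - 1) < 1`, and the two
points of the ellipse at height `y₀` have the same image.
-/

open Set

section NormalMap

variable {a : ℝ}

lemma mem_ellipse_iff (ha : a ≠ 0) {p : EuclideanSpace ℝ (Fin 2)} :
    p ∈ ellipse a ↔ p 0 ^ 2 = a ^ 2 * (1 - p 1 ^ 2) := by
  rw [ellipse, mem_ofPred_eq, div_pow]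
  constructor <;> intro h <;> field_simp at h ⊢ <;> linarith

lemma sq_le_one_of_mem_ellipse {p : EuclideanSpace ℝ (Fin 2)} (hp : p ∈ ellipse a) :
    p 1 ^ 2 ≤ 1 := by
  have : (p 0 / a) ^ 2 + p 1 ^ 2 = 1 := hp
  nlinarith [sq_nonneg (p 0 / a)]

def normalDenom (a y : ℝ) : ℝ := 1 + (a ^ 4 - 1) * y ^ 2

def normalScaleX (a y : ℝ) : ℝ := ((a ^ 2 - 1) ^ 2 * y ^ 2 - 1) / normalDenom a y

def normalY (a y : ℝ) : ℝ := y * (1 - 2 * a ^ 2 - (a ^ 2 - 1) ^ 2 * y ^ 2) / normalDenom a y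

def normalImage (a : ℝ) (p : EuclideanSpace ℝ (Fin 2)) : EuclideanSpace ℝ (Fin 2) :=
  pt2 (p 0 * normalScaleX a (p 1)) (normalY a (p 1))

lemma normalDenom_pos (ha : 1 < a) (y : ℝ) : 0 < normalDenom a y := by
  have : 1 < a ^ 4 := one_lt_pow₀ ha (by norm_num)
  unfold normalDenom
  nlinarith [sq_nonneg y]

lemma eq_zero_or_mul_normalDenom_eq_of_mem_ellipse (ha : a ≠ 0) {p : EuclideanSpace ℝ (Fin 2)}
    {t : ℝ} (hp : p ∈ ellipse a) (ht : p + t • normalDir a p ∈ ellipse a) :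
    t = 0 ∨ t * normalDenom a (p 1) = -2 * a ^ 2 * (1 + (a ^ 2 - 1) * p 1 ^ 2) := by
  rw [mem_ellipse_iff ha] at hp ht
  have hq : (p 0 + t * (p 0 / a ^ 2)) ^ 2 = a ^ 2 * (1 - (p 1 + t * p 1) ^ 2) := ht
  have hquad : a ^ 2 * (t * (t * normalDenom a (p 1) + 2 * a ^ 2 * (1 + (a ^ 2 - 1) * p 1 ^ 2)))
      = 0 := by
    field_simp at hq
    unfold normalDenom
    linear_combination hq - (a ^ 2 + t) ^ 2 * hp
  rcases mul_eq_zero.1 ((mul_eq_zero.1 hquad).resolve_left (pow_ne_zero 2 ha)) with h | h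
  · exact Or.inl h
  · exact Or.inr (by linear_combination h)

lemma eq_normalImage (ha : 1 < a) {p q : EuclideanSpace ℝ (Fin 2)} {t : ℝ}
    (hp : p ∈ ellipse a) (hq : q ∈ ellipse a) (hne : q ≠ p) (ht : q = p + t • normalDir a p) :
    q = normalImage a p := by
  have ha0 : a ≠ 0 := (zero_lt_one.trans ha).ne'
  have hD := (normalDenom_pos ha (p 1)).ne'
  rcases eq_zero_or_mul_normalDenom_eq_of_mem_ellipse ha0 hp (ht ▸ hq) with rfl | htD
  · exact absurd (by simpa using ht) hne
  have ht' : t = -2 * a ^ 2 * (1 + (a ^ 2 - 1) * p 1 ^ 2) / normalDenom a (p 1) := by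
    rw [eq_div_iff hD, htD]
  subst ht ht'
  refine PiLp.ext (Fin.forall_fin_two.2 ⟨?_, ?_⟩)
  · change p 0 + _ * (p 0 / a ^ 2) = p 0 * normalScaleX a (p 1)
    rw [normalScaleX]
    field_simp
    unfold normalDenom
    ring
  · change p 1 + _ * p 1 = normalY a (p 1)
    rw [normalY]
    field_simp
    unfold normalDenom
    ring

lemma one_sub_normalY_sq (ha : 1 < a) (y : ℝ) :
    1 - normalY a y ^ 2 = normalScaleX a y ^ 2 * (1 - y ^ 2) := by
  have hD := (normalDenom_pos ha y).ne'
  rw [normalY, normalScaleX]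
  field_simp
  unfold normalDenom
  ring

lemma mapsTo_normalImage (ha : 1 < a) : MapsTo (normalImage a) (ellipse a) (ellipse a) := by
  have ha0 : a ≠ 0 := (zero_lt_one.trans ha).ne'
  intro p hp
  rw [mem_ellipse_iff ha0] at hp ⊢
  change (p 0 * normalScaleX a (p 1)) ^ 2 = a ^ 2 * (1 - normalY a (p 1) ^ 2)
  rw [one_sub_normalY_sq ha, mul_pow, hp]
  ring

lemma normalY_neg_one (ha : 1 < a) : normalY a (-1) = 1 := by
  have hD := (normalDenom_pos ha (-1)).ne'
  rw [normalY]
  field_simp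
  unfold normalDenom
  ring

lemma normalY_one (ha : 1 < a) : normalY a 1 = -1 := by
  have hD := (normalDenom_pos ha 1).ne'
  rw [normalY]
  field_simp
  unfold normalDenom
  ring

lemma surjOn_normalY (ha : 1 < a) : SurjOn (normalY a) (Icc (-1) 1) (Icc (-1) 1) := by
  have hcont : ContinuousOn (normalY a) (Icc (-1) 1) :=
    Continuous.continuousOn <| by
      unfold normalY normalDenom
      exact Continuous.div (by fun_prop) (by fun_prop) fun y => (normalDenom_pos ha y).ne'
  have := intermediate_value_Icc' (show (-1 : ℝ) ≤ 1 by norm_num) hcont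
  rwa [normalY_one ha, normalY_neg_one ha] at this

lemma mem_Icc_of_mem_ellipse {p : EuclideanSpace ℝ (Fin 2)} (hp : p ∈ ellipse a) :
    p 1 ∈ Icc (-1) 1 :=
  abs_le.1 ((sq_le_one_iff_abs_le_one _).1 (sq_le_one_of_mem_ellipse hp))

lemma surjOn_normalImage (ha : 1 < a) : SurjOn (normalImage a) (ellipse a) (ellipse a) := by
  have ha0 : a ≠ 0 := (zero_lt_one.trans ha).ne'
  intro q hq
  obtain ⟨y, hy, hgy⟩ := surjOn_normalY ha (mem_Icc_of_mem_ellipse hq)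
  have hy2 : y ^ 2 ≤ 1 := (sq_le_one_iff_abs_le_one y).2 (abs_le.2 hy)
  have hq0 : q 0 ^ 2 = a ^ 2 * (normalScaleX a y ^ 2 * (1 - y ^ 2)) := by
    rw [(mem_ellipse_iff ha0).1 hq, ← hgy, one_sub_normalY_sq ha]
  obtain ⟨x, hx, hxq⟩ : ∃ x, x ^ 2 = a ^ 2 * (1 - y ^ 2) ∧ x * normalScaleX a y = q 0 := by
    by_cases hs : normalScaleX a y = 0
    · refine ⟨√(a ^ 2 * (1 - y ^ 2)), Real.sq_sqrt (by nlinarith), ?_⟩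
      rw [hs, zero_pow two_ne_zero, zero_mul, mul_zero] at hq0
      rw [hs, mul_zero, pow_eq_zero_iff two_ne_zero |>.1 hq0]
    · refine ⟨q 0 / normalScaleX a y, ?_, div_mul_cancel₀ _ hs⟩
      rw [div_pow, hq0]
      field_simp
  exact ⟨pt2 x y, (mem_ellipse_iff ha0).2 hx, PiLp.ext (Fin.forall_fin_two.2 ⟨hxq, hgy⟩)⟩

lemma normalY_injOn (ha : 1 < a) (ha2 : a ^ 2 ≤ 2) : InjOn (normalY a) (Icc (-1) 1) := by
  intro u hu v hv huv
  have hD := normalDenom_pos ha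
  rw [normalY, normalY, div_eq_div_iff (hD u).ne' (hD v).ne'] at huv
  -- For `u, v ∈ [-1, 1]` and `1 < a² ≤ 2` every summand of the second factor is nonnegative,
  -- and the first one vanishes only at `u = v`.
  have hfac : (u - v) * ((a ^ 2 - 1) ^ 2 * (u - v) ^ 2 + ((2 - a ^ 2) * a ^ 2) ^ 2
      + (a ^ 2 - 1) ^ 3 * (a ^ 2 + 1) * (1 - u * v) ^ 2
      + 2 * (a ^ 2 - 1) * a ^ 4 * (2 - a ^ 2) * (1 - u * v)) = 0 := by
    unfold normalDenom at huv
    linear_combination -huv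
  by_contra hne
  have hsos := (mul_eq_zero.1 hfac).resolve_left (sub_ne_zero.2 hne)
  have ha1 : 0 < a ^ 2 - 1 := by nlinarith
  have huv1 : 0 ≤ 1 - u * v := by nlinarith [hu.1, hu.2, hv.1, hv.2]
  have hpos : 0 < (a ^ 2 - 1) ^ 2 * (u - v) ^ 2 := by
    have := sub_ne_zero.2 hne
    positivity
  have h3 : 0 ≤ (a ^ 2 - 1) ^ 3 * (a ^ 2 + 1) * (1 - u * v) ^ 2 := by positivity
  have h4 : 0 ≤ 2 * (a ^ 2 - 1) * a ^ 4 * (2 - a ^ 2) * (1 - u * v) := by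
    have := sub_nonneg.2 ha2
    positivity
  linarith [sq_nonneg ((2 - a ^ 2) * a ^ 2)]

lemma normalScaleX_neg (ha2 : a ^ 2 ≤ 2) {y : ℝ} (hy : y ^ 2 < 1) : normalScaleX a y < 0 := by
  apply div_neg_of_neg_of_pos
  · have h1 : (a ^ 2 - 1) ^ 2 ≤ 1 := by nlinarith [sq_nonneg a]
    nlinarith [mul_le_mul_of_nonneg_right h1 (sq_nonneg y)]
  · unfold normalDenom
    nlinarith [pow_two_nonneg (a ^ 2), sq_nonneg y]

lemma injOn_normalImage (ha : 1 < a) (ha2 : a ^ 2 ≤ 2) :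
    InjOn (normalImage a) (ellipse a) := by
  have ha0 : a ≠ 0 := (zero_lt_one.trans ha).ne'
  intro p hp q hq hpq
  have hy : p 1 = q 1 :=
    normalY_injOn ha ha2 (mem_Icc_of_mem_ellipse hp) (mem_Icc_of_mem_ellipse hq)
      (congrArg (· 1) hpq)
  have hx : p 0 * normalScaleX a (p 1) = q 0 * normalScaleX a (q 1) := congrArg (· 0) hpq
  rw [← hy] at hx
  refine PiLp.ext (Fin.forall_fin_two.2 ⟨?_, hy⟩)
  rcases (sq_le_one_of_mem_ellipse hp).lt_or_eq with hlt | heq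
  · exact mul_right_cancel₀ (normalScaleX_neg ha2 hlt).ne hx
  · have hp0 := (mem_ellipse_iff ha0).1 hp
    have hq0 := (mem_ellipse_iff ha0).1 hq
    rw [heq, sub_self, mul_zero, pow_eq_zero_iff two_ne_zero] at hp0
    rw [← hy, heq, sub_self, mul_zero, pow_eq_zero_iff two_ne_zero] at hq0
    rw [hp0, hq0]

lemma not_injOn_normalImage (ha2 : 2 < a ^ 2) : ¬ InjOn (normalImage a) (ellipse a) := by
  have ha0 : a ≠ 0 := by
    rintro rfl
    norm_num at ha2
  set y₀ := 1 / (a ^ 2 - 1) with hy₀_def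
  have hy₀ : y₀ ^ 2 < 1 := by
    have h0 : 0 < y₀ := one_div_pos.2 (by linarith)
    have h1 : y₀ < 1 := (div_lt_one (by linarith)).2 (by linarith)
    nlinarith
  set x₀ := √(a ^ 2 * (1 - y₀ ^ 2))
  have hx₀ : 0 < x₀ := Real.sqrt_pos.2 (by positivity)
  have hmem : ∀ x, x ^ 2 = x₀ ^ 2 → pt2 x y₀ ∈ ellipse a := fun x hx =>
    (mem_ellipse_iff ha0).2 (hx.trans (Real.sq_sqrt (by positivity)))
  have hs : normalScaleX a y₀ = 0 := by
    have ha1 : a ^ 2 - 1 ≠ 0 := by linarith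
    rw [normalScaleX, div_eq_zero_iff, hy₀_def]
    left
    field_simp
    ring
  intro hinj
  have hsame : normalImage a (pt2 x₀ y₀) = normalImage a (pt2 (-x₀) y₀) := by
    change pt2 (x₀ * normalScaleX a y₀) (normalY a y₀)
      = pt2 (-x₀ * normalScaleX a y₀) (normalY a y₀)
    rw [hs, mul_zero, mul_zero]
  have := congrArg (· 0) (hinj (hmem x₀ rfl) (hmem (-x₀) (neg_sq x₀)) hsame)
  change x₀ = -x₀ at this
  linarith

lemma injOn_normalImage_iff (ha : 1 < a) : InjOn (normalImage a) (ellipse a) ↔ a ^ 2 ≤ 2 :=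
  ⟨fun h => not_lt.1 fun h2 => not_injOn_normalImage h2 h, injOn_normalImage ha⟩

end NormalMap

/-- **Bijectivity of the normal map characterizes small eccentricity**
(Adamaszek–Adams–Reddy, Lemma 6.4). Let `Y` be an ellipse with `a > 1` and let
`h : Y → Y` send each point `p` to the unique other intersection of the normal line of
`Y` at `p` with `Y`. Then `h` is bijective if and only if `a ≤ √2`. -/
theorem ellipse_normal_map_bijective_iff (a : ℝ) (ha : 1 < a)
    (h : ↥(ellipse a) → ↥(ellipse a))
    (hh : ∀ p : ↥(ellipse a), h p ≠ p ∧
      ∃ t : ℝ, ((h p : EuclideanSpace ℝ (Fin 2))) = ↑p + t • normalDir a ↑p) :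
    Function.Bijective h ↔ a ≤ Real.sqrt 2 := by
  have hmaps := mapsTo_normalImage ha
  have h_eq : h = hmaps.restrict (normalImage a) (ellipse a) (ellipse a) := by
    funext p
    obtain ⟨hne, t, ht⟩ := hh p
    exact Subtype.ext (eq_normalImage ha p.2 (h p).2 (Subtype.coe_ne_coe.2 hne) ht)
  rw [h_eq, Function.Bijective, hmaps.restrict_inj, hmaps.restrict_surjective_iff,
    and_iff_left (surjOn_normalImage ha), injOn_normalImage_iff ha,
    Real.le_sqrt (zero_lt_one.trans ha).le zero_le_two]

end
end

section
/- Let Y = {(x,y) ∈ ℝ² : (x/a)² + y² = 1} be an ellipse of small eccentricity, meaning 1 < a ≤ √2, and let p ∈ Y. Then there exists a unique equilateral triangle inscribed in Y (i.e. with all three vertices on Y) having p as one of its vertices. -/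
open Filter Topology Metric

noncomputable section

/-- An inscribed equilateral triangle in the ellipse: three distinct points of the
ellipse that are pairwise at equal Euclidean distance. -/
def IsInscribedEqTri (a : ℝ) (T : Set (EuclideanSpace ℝ (Fin 2))) : Prop :=
  T ⊆ ellipse a ∧ ∃ x y z : EuclideanSpace ℝ (Fin 2), x ≠ y ∧ y ≠ z ∧ x ≠ z ∧
    T = {x, y, z} ∧ dist x y = dist y z ∧ dist x z = dist y z

/-!
An equilateral triangle with circumcentre `c` and circumradius `ρ`, whose vertices
`c + ρ (cos θ, sin θ)` (`θ ∈ α + 2πℤ/3`) lie on `x² + a²y² = a²`, satisfies three equations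
forming a trigonometric polynomial of degree two in `θ` that vanishes at three equally spaced
angles; this forces `4c = ρ (a² - 1) (cos 3α, sin 3α / a²)`. So the vertex at angle `θ` is the
point `V θ = (a cos τ, sin τ)` of the ellipse, where `τ θ` is an argument of
`γ θ = (a ((a² - 1) cos 3θ + 4 cos θ), (a² - 1) sin 3θ + 4a² sin θ)`, and the inscribed
equilateral triangles are exactly `{V α, V (α + 2π/3), V (α + 4π/3)}`.
For `1 ≤ a`, `a² < 7/3` the curve `γ` stays within a quarter turn of the direction `θ` and turns
strictly positively (`γ × γ' > 0`), so `τ` can be chosen continuous and strictly increasing, with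
`τ (θ + 2π) = τ θ + 2π`. Hence `V` is a bijection from `ℝ/2πℤ` onto the ellipse, and each point
of the ellipse is a vertex of exactly one inscribed equilateral triangle.
-/

open Real Function

/-- A continuous argument of `θ ↦ (f θ, g θ)` wherever `f θ * cos θ + g θ * sin θ > 0`. -/
def angleLift (f g : ℝ → ℝ) (θ : ℝ) : ℝ :=
  θ + arctan ((g θ * cos θ - f θ * sin θ) / (f θ * cos θ + g θ * sin θ))

lemma sq_add_sq_eq_rotate (x y θ : ℝ) :
    x ^ 2 + y ^ 2 = (x * cos θ + y * sin θ) ^ 2 + (y * cos θ - x * sin θ) ^ 2 := by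
  linear_combination -(x ^ 2 + y ^ 2) * sin_sq_add_cos_sq θ

lemma sqrt_one_add_div_sq {x : ℝ} (hx : 0 < x) (y : ℝ) :
    √(1 + (y / x) ^ 2) = √(x ^ 2 + y ^ 2) / x := by
  rw [show 1 + (y / x) ^ 2 = (x ^ 2 + y ^ 2) / x ^ 2 by field_simp, sqrt_div' _ (sq_nonneg x),
    sqrt_sq hx.le]

section AngleLift

variable {f g : ℝ → ℝ} {θ : ℝ}

lemma sq_add_sq_pos_of_radial_pos (h : 0 < f θ * cos θ + g θ * sin θ) :
    0 < f θ ^ 2 + g θ ^ 2 := by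
  rw [sq_add_sq_eq_rotate _ _ θ]; positivity

lemma sqrt_mul_cos_angleLift (h : 0 < f θ * cos θ + g θ * sin θ) :
    √(f θ ^ 2 + g θ ^ 2) * cos (angleLift f g θ) = f θ := by
  have hr := (sqrt_pos.2 (sq_add_sq_pos_of_radial_pos h)).ne'
  rw [angleLift, cos_add, cos_arctan, sin_arctan, sqrt_one_add_div_sq h, ← sq_add_sq_eq_rotate]
  field_simp
  linear_combination f θ * sin_sq_add_cos_sq θ

lemma sqrt_mul_sin_angleLift (h : 0 < f θ * cos θ + g θ * sin θ) :
    √(f θ ^ 2 + g θ ^ 2) * sin (angleLift f g θ) = g θ := by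
  have hr := (sqrt_pos.2 (sq_add_sq_pos_of_radial_pos h)).ne'
  rw [angleLift, sin_add, cos_arctan, sin_arctan, sqrt_one_add_div_sq h, ← sq_add_sq_eq_rotate]
  field_simp
  linear_combination g θ * sin_sq_add_cos_sq θ

lemma hasDerivAt_angleLift {f' g' : ℝ} (hf : HasDerivAt f f' θ) (hg : HasDerivAt g g' θ)
    (h : 0 < f θ * cos θ + g θ * sin θ) :
    HasDerivAt (angleLift f g) ((f θ * g' - g θ * f') / (f θ ^ 2 + g θ ^ 2)) θ := by
  have hrad := (hf.mul (hasDerivAt_cos θ)).add (hg.mul (hasDerivAt_sin θ))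
  have htan := (hg.mul (hasDerivAt_cos θ)).sub (hf.mul (hasDerivAt_sin θ))
  refine ((hasDerivAt_id θ).add ((htan.div hrad h.ne').arctan)).congr_deriv ?_
  simp only [Pi.div_apply, Pi.sub_apply, Pi.add_apply, Pi.mul_apply]
  rw [sq_add_sq_eq_rotate (f θ) (g θ) θ]
  set D := f θ * cos θ + g θ * sin θ with hD
  set N := g θ * cos θ - f θ * sin θ with hN
  have hr : D ^ 2 + N ^ 2 ≠ 0 := by positivity
  field_simp
  rw [hD, hN]
  linear_combination (f θ * g' - g θ * f') * sin_sq_add_cos_sq θ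

lemma strictMono_angleLift {f' g' : ℝ → ℝ} (hf : ∀ θ, HasDerivAt f (f' θ) θ)
    (hg : ∀ θ, HasDerivAt g (g' θ) θ) (hpos : ∀ θ, 0 < f θ * cos θ + g θ * sin θ)
    (hturn : ∀ θ, 0 < f θ * g' θ - g θ * f' θ) : StrictMono (angleLift f g) :=
  strictMono_of_hasDerivAt_pos (fun θ => hasDerivAt_angleLift (hf θ) (hg θ) (hpos θ))
    fun θ => div_pos (hturn θ) (sq_add_sq_pos_of_radial_pos (hpos θ))

lemma surjective_angleLift (hf : Continuous f) (hg : Continuous g)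
    (hpos : ∀ θ, 0 < f θ * cos θ + g θ * sin θ) : Surjective (angleLift f g) := by
  have hcont : Continuous (angleLift f g) :=
    continuous_id.add (continuous_arctan.comp (Continuous.div (by fun_prop) (by fun_prop)
      fun θ => (hpos θ).ne'))
  refine hcont.surjective ?_ ?_
  · refine tendsto_atTop_mono (fun θ => ?_) (tendsto_atTop_add_const_right _ (-(π / 2)) tendsto_id)
    simp only [angleLift, id]
    linarith [neg_pi_div_two_lt_arctan ((g θ * cos θ - f θ * sin θ) / (f θ * cos θ + g θ * sin θ))]
  · refine tendsto_atBot_mono (fun θ => ?_) (tendsto_atBot_add_const_right _ (π / 2) tendsto_id)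
    simp only [angleLift, id]
    linarith [arctan_lt_pi_div_two ((g θ * cos θ - f θ * sin θ) / (f θ * cos θ + g θ * sin θ))]

lemma angleLift_add_int_mul_two_pi (hf : Periodic f (2 * π)) (hg : Periodic g (2 * π))
    (θ : ℝ) (n : ℤ) : angleLift f g (θ + n * (2 * π)) = angleLift f g θ + n * (2 * π) := by
  simp only [angleLift, hf.int_mul n θ, hg.int_mul n θ, cos_add_int_mul_two_pi,
    sin_add_int_mul_two_pi]
  ring

lemma exists_int_of_cos_sin_angleLift_eq (hf : Periodic f (2 * π)) (hg : Periodic g (2 * π))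
    (hmono : StrictMono (angleLift f g)) {θ θ' : ℝ}
    (hcos : cos (angleLift f g θ) = cos (angleLift f g θ'))
    (hsin : sin (angleLift f g θ) = sin (angleLift f g θ')) :
    ∃ n : ℤ, θ' = θ + n * (2 * π) := by
  obtain ⟨n, hn⟩ := Real.Angle.angle_eq_iff_two_pi_dvd_sub.1 (Real.Angle.cos_sin_inj hcos hsin)
  refine ⟨-n, hmono.injective ?_⟩
  rw [angleLift_add_int_mul_two_pi hf hg]
  push_cast
  linarith

end AngleLift

lemma pt2_apply_zero (x y : ℝ) : pt2 x y 0 = x := rfl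

lemma pt2_apply_one (x y : ℝ) : pt2 x y 1 = y := rfl

lemma eq_pt2 (p : EuclideanSpace ℝ (Fin 2)) : p = pt2 (p 0) (p 1) := by
  ext i; fin_cases i <;> rfl

lemma dist_sq_eq_coords (p q : EuclideanSpace ℝ (Fin 2)) :
    dist p q ^ 2 = (p 0 - q 0) ^ 2 + (p 1 - q 1) ^ 2 := by
  rw [EuclideanSpace.dist_eq, sq_sqrt (by positivity), Fin.sum_univ_two, Real.dist_eq,
    Real.dist_eq, sq_abs, sq_abs]

lemma exists_eq_sqrt_mul_cos_sin (x y : ℝ) :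
    ∃ θ, x = √(x ^ 2 + y ^ 2) * cos θ ∧ y = √(x ^ 2 + y ^ 2) * sin θ := by
  have hnorm : ‖(⟨x, y⟩ : ℂ)‖ = √(x ^ 2 + y ^ 2) := by
    rw [Complex.norm_def, Complex.normSq_mk]; ring_nf
  exact ⟨Complex.arg ⟨x, y⟩, by rw [← hnorm, Complex.norm_mul_cos_arg],
    by rw [← hnorm, Complex.norm_mul_sin_arg]⟩

lemma cos_add_two_pi_div_three (x : ℝ) : cos (x + 2 * π / 3) = -(cos x + √3 * sin x) / 2 := by
  rw [cos_add, show 2 * π / 3 = π - π / 3 by ring, cos_pi_sub, sin_pi_sub, cos_pi_div_three,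
    sin_pi_div_three]
  ring

lemma sin_add_two_pi_div_three (x : ℝ) : sin (x + 2 * π / 3) = (√3 * cos x - sin x) / 2 := by
  rw [sin_add, show 2 * π / 3 = π - π / 3 by ring, cos_pi_sub, sin_pi_sub, cos_pi_div_three,
    sin_pi_div_three]
  ring

lemma cos_add_four_pi_div_three (x : ℝ) : cos (x + 4 * π / 3) = (√3 * sin x - cos x) / 2 := by
  rw [show x + 4 * π / 3 = x + 2 * π / 3 + 2 * π / 3 by ring, cos_add_two_pi_div_three,
    cos_add_two_pi_div_three, sin_add_two_pi_div_three]
  linear_combination (-cos x / 4) * sq_sqrt (show (0 : ℝ) ≤ 3 by norm_num)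

lemma sin_add_four_pi_div_three (x : ℝ) : sin (x + 4 * π / 3) = -(sin x + √3 * cos x) / 2 := by
  rw [show x + 4 * π / 3 = x + 2 * π / 3 + 2 * π / 3 by ring, sin_add_two_pi_div_three,
    cos_add_two_pi_div_three, sin_add_two_pi_div_three]
  linear_combination (-sin x / 4) * sq_sqrt (show (0 : ℝ) ≤ 3 by norm_num)

def circlePoint (c₀ c₁ ρ θ : ℝ) : EuclideanSpace ℝ (Fin 2) := pt2 (c₀ + ρ * cos θ) (c₁ + ρ * sin θ)

def triAngles (α : ℝ) : Set ℝ := {α, α + 2 * π / 3, α + 4 * π / 3}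

def regularTri (c₀ c₁ ρ α : ℝ) : Set (EuclideanSpace ℝ (Fin 2)) :=
  circlePoint c₀ c₁ ρ '' triAngles α

section TriAngles

variable {β : Type*} {f : ℝ → β} {α θ : ℝ}

lemma image_triAngles_of_mem (hf : Periodic f (2 * π)) (h : θ ∈ triAngles α) :
    f '' triAngles θ = f '' triAngles α := by
  have h₁ : f (α + 2 * π) = f α := hf α
  have h₂ : f (α + 8 * π / 3) = f (α + 2 * π / 3) := by
    rw [← hf (α + 2 * π / 3)]; ring_nf
  rcases h with rfl | rfl | rfl
  · rfl
  all_goals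
    simp only [triAngles, Set.image_insert_eq, Set.image_singleton, add_assoc, h₁, h₂,
      show 2 * π / 3 + 2 * π / 3 = 4 * π / 3 by ring, show 2 * π / 3 + 4 * π / 3 = 2 * π by ring,
      show 4 * π / 3 + 2 * π / 3 = 2 * π by ring, show 4 * π / 3 + 4 * π / 3 = 8 * π / 3 by ring]
    ext; simp only [Set.mem_insert_iff, Set.mem_singleton_iff]; tauto

lemma image_triAngles_add_int_mul (hf : Periodic f (2 * π)) (α : ℝ) (n : ℤ) :
    f '' triAngles (α + n * (2 * π)) = f '' triAngles α := by
  simp only [triAngles, Set.image_insert_eq, Set.image_singleton,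
    show α + n * (2 * π) + 2 * π / 3 = α + 2 * π / 3 + n * (2 * π) by ring,
    show α + n * (2 * π) + 4 * π / 3 = α + 4 * π / 3 + n * (2 * π) by ring, hf.int_mul n _]

lemma cos_sin_three_mul_of_mem_triAngles (h : θ ∈ triAngles α) :
    cos (3 * θ) = cos (3 * α) ∧ sin (3 * θ) = sin (3 * α) := by
  rcases h with rfl | rfl | rfl
  · exact ⟨rfl, rfl⟩
  · rw [show 3 * (α + 2 * π / 3) = 3 * α + 2 * π by ring, cos_add_two_pi, sin_add_two_pi]
    exact ⟨rfl, rfl⟩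
  · rw [show 3 * (α + 4 * π / 3) = 3 * α + (2 : ℕ) * (2 * π) by push_cast; ring,
      cos_add_nat_mul_two_pi, sin_add_nat_mul_two_pi]
    exact ⟨rfl, rfl⟩

end TriAngles

section RegularTri

variable {c₀ c₁ ρ : ℝ}

lemma circlePoint_periodic : Periodic (circlePoint c₀ c₁ ρ) (2 * π) := fun θ => by
  simp only [circlePoint, cos_add_two_pi, sin_add_two_pi]

lemma dist_circlePoint_add_two_pi_div_three (hρ : 0 ≤ ρ) (θ : ℝ) :
    dist (circlePoint c₀ c₁ ρ θ) (circlePoint c₀ c₁ ρ (θ + 2 * π / 3)) = √3 * ρ := by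
  rw [← sqrt_sq dist_nonneg, dist_sq_eq_coords, ← sqrt_sq (by positivity : 0 ≤ √3 * ρ)]
  congr 1
  simp only [circlePoint, pt2_apply_zero, pt2_apply_one, cos_add_two_pi_div_three,
    sin_add_two_pi_div_three]
  linear_combination (9 / 4 * ρ ^ 2 + ρ ^ 2 / 4 * √3 ^ 2) * sin_sq_add_cos_sq θ
    + (ρ ^ 2 / 4 - ρ ^ 2) * sq_sqrt (show (0 : ℝ) ≤ 3 by norm_num)

lemma isInscribedEqTri_regularTri {a α : ℝ} (hρ : 0 < ρ)
    (h : regularTri c₀ c₁ ρ α ⊆ ellipse a) : IsInscribedEqTri a (regularTri c₀ c₁ ρ α) := by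
  have hside := dist_circlePoint_add_two_pi_div_three (c₀ := c₀) (c₁ := c₁) hρ.le
  have h₁ := hside α
  have h₂ := hside (α + 2 * π / 3)
  have h₃ := hside (α + 4 * π / 3)
  rw [add_assoc, show 2 * π / 3 + 2 * π / 3 = 4 * π / 3 by ring] at h₂
  rw [add_assoc, show 4 * π / 3 + 2 * π / 3 = 2 * π by ring, circlePoint_periodic α,
    dist_comm] at h₃
  have hpos : 0 < √3 * ρ := by positivity
  refine ⟨h, _, _, _, dist_pos.1 (h₁ ▸ hpos), dist_pos.1 (h₂ ▸ hpos), dist_pos.1 (h₃ ▸ hpos),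
    ?_, h₁.trans h₂.symm, h₃.trans h₂.symm⟩
  simp only [regularTri, triAngles, Set.image_insert_eq, Set.image_singleton]

end RegularTri

lemma cos_add_cos_add_cos_thirds_eq_zero (α : ℝ) :
    cos α + cos (α + 2 * π / 3) + cos (α + 4 * π / 3) = 0 := by
  rw [cos_add_two_pi_div_three, cos_add_four_pi_div_three]; ring

lemma sin_add_sin_add_sin_thirds_eq_zero (α : ℝ) :
    sin α + sin (α + 2 * π / 3) + sin (α + 4 * π / 3) = 0 := by
  rw [sin_add_two_pi_div_three, sin_add_four_pi_div_three]; ring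

lemma insert_eq_regularTri {x y z : EuclideanSpace ℝ (Fin 2)} {c₀ c₁ ρ α β : ℝ}
    (hx : x = circlePoint c₀ c₁ ρ α) (hy : y = circlePoint c₀ c₁ ρ β)
    (hz₀ : x 0 + y 0 + z 0 = 3 * c₀) (hz₁ : x 1 + y 1 + z 1 = 3 * c₁)
    (hβ : cos (β - α) = -1 / 2) : ({x, y, z} : Set _) = regularTri c₀ c₁ ρ α := by
  rw [hx, hy] at hz₀ hz₁
  simp only [circlePoint, pt2_apply_zero, pt2_apply_one] at hz₀ hz₁
  have hyz : ∀ δ δ', cos α + cos (α + δ) + cos (α + δ') = 0 →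
      sin α + sin (α + δ) + sin (α + δ') = 0 → ∀ n : ℤ, β = α + δ + n * (2 * π) →
      y = circlePoint c₀ c₁ ρ (α + δ) ∧ z = circlePoint c₀ c₁ ρ (α + δ') := by
    rintro δ δ' hc hs n rfl
    rw [cos_add_int_mul_two_pi] at hz₀
    rw [sin_add_int_mul_two_pi] at hz₁
    refine ⟨hy.trans (circlePoint_periodic.int_mul n _), (eq_pt2 z).trans ?_⟩
    rw [circlePoint]
    congr 1
    · linear_combination hz₀ - ρ * hc
    · linear_combination hz₁ - ρ * hs
  have hcos : cos (β - α) = cos (2 * π / 3) := by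
    rw [hβ]; simpa using (cos_add_two_pi_div_three 0).symm
  obtain ⟨k, hk | hk⟩ := cos_eq_cos_iff.1 hcos
  · obtain ⟨rfl, rfl⟩ := hyz _ _ (cos_add_cos_add_cos_thirds_eq_zero α)
      (sin_add_sin_add_sin_thirds_eq_zero α) (-k) (by push_cast; linarith)
    simp only [hx, regularTri, triAngles, Set.image_insert_eq, Set.image_singleton]
  · obtain ⟨rfl, rfl⟩ := hyz (4 * π / 3) (2 * π / 3)
      (by linarith [cos_add_cos_add_cos_thirds_eq_zero α])
      (by linarith [sin_add_sin_add_sin_thirds_eq_zero α]) (k - 1) (by push_cast; linarith)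
    simp only [hx, regularTri, triAngles, Set.image_insert_eq, Set.image_singleton,
      Set.pair_comm]

lemma exists_eq_regularTri {x y z : EuclideanSpace ℝ (Fin 2)} (hxy : x ≠ y)
    (h₁ : dist x y = dist y z) (h₂ : dist x z = dist y z) :
    ∃ c₀ c₁ ρ α, 0 < ρ ∧ ({x, y, z} : Set _) = regularTri c₀ c₁ ρ α := by
  set d := dist y z
  set c₀ := (x 0 + y 0 + z 0) / 3
  set c₁ := (x 1 + y 1 + z 1) / 3
  have hxy2 := dist_sq_eq_coords x y
  have hxz2 := dist_sq_eq_coords x z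
  have hyz2 := dist_sq_eq_coords y z
  rw [h₁] at hxy2
  rw [h₂] at hxz2
  have hρ : 0 < √(d ^ 2 / 3) := sqrt_pos.2 (by have := dist_pos.2 hxy; rw [h₁] at this; positivity)
  obtain ⟨α, hx₀, hx₁⟩ := exists_eq_sqrt_mul_cos_sin (x 0 - c₀) (x 1 - c₁)
  obtain ⟨β, hy₀, hy₁⟩ := exists_eq_sqrt_mul_cos_sin (y 0 - c₀) (y 1 - c₁)
  rw [show (x 0 - c₀) ^ 2 + (x 1 - c₁) ^ 2 = d ^ 2 / 3 by
    linear_combination -(2 / 9) * hxy2 - (2 / 9) * hxz2 + (1 / 9) * hyz2] at hx₀ hx₁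
  rw [show (y 0 - c₀) ^ 2 + (y 1 - c₁) ^ 2 = d ^ 2 / 3 by
    linear_combination -(2 / 9) * hxy2 - (2 / 9) * hyz2 + (1 / 9) * hxz2] at hy₀ hy₁
  set ρ := √(d ^ 2 / 3)
  have hρ2 : ρ ^ 2 = d ^ 2 / 3 := sq_sqrt (by positivity)
  refine ⟨c₀, c₁, ρ, α, hρ, insert_eq_regularTri (β := β) ((eq_pt2 x).trans ?_)
    ((eq_pt2 y).trans ?_) (by ring) (by ring) ?_⟩
  · rw [circlePoint, ← hx₀, ← hx₁]; ring_nf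
  · rw [circlePoint, ← hy₀, ← hy₁]; ring_nf
  · refine mul_left_cancel₀ (pow_ne_zero 2 hρ.ne') ?_
    rw [cos_sub]
    rw [show x 0 - y 0 = ρ * cos α - ρ * cos β by linear_combination hx₀ - hy₀,
      show x 1 - y 1 = ρ * sin α - ρ * sin β by linear_combination hx₁ - hy₁] at hxy2
    linear_combination (1 / 2) * hxy2 + (3 / 2) * hρ2 + (ρ ^ 2 / 2) * sin_sq_add_cos_sq α
      + (ρ ^ 2 / 2) * sin_sq_add_cos_sq β

lemma IsInscribedEqTri.exists_eq_regularTri {a : ℝ} {T : Set (EuclideanSpace ℝ (Fin 2))}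
    (h : IsInscribedEqTri a T) : ∃ c₀ c₁ ρ α, 0 < ρ ∧ T = regularTri c₀ c₁ ρ α := by
  obtain ⟨-, x, y, z, hxy, -, -, rfl, h₁, h₂⟩ := h
  exact _root_.exists_eq_regularTri hxy h₁ h₂

def vertexDirX (a θ : ℝ) : ℝ := a * ((a ^ 2 - 1) * cos (3 * θ) + 4 * cos θ)

def vertexDirY (a θ : ℝ) : ℝ := (a ^ 2 - 1) * sin (3 * θ) + 4 * a ^ 2 * sin θ

section VertexDir

variable {a : ℝ}

lemma vertexDirX_periodic : Periodic (vertexDirX a) (2 * π) := fun θ => by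
  rw [vertexDirX, vertexDirX, cos_add_two_pi,
    show 3 * (θ + 2 * π) = 3 * θ + (3 : ℕ) * (2 * π) by push_cast; ring, cos_add_nat_mul_two_pi]

lemma vertexDirY_periodic : Periodic (vertexDirY a) (2 * π) := fun θ => by
  rw [vertexDirY, vertexDirY, sin_add_two_pi,
    show 3 * (θ + 2 * π) = 3 * θ + (3 : ℕ) * (2 * π) by push_cast; ring, sin_add_nat_mul_two_pi]

lemma hasDerivAt_vertexDirX (θ : ℝ) :
    HasDerivAt (vertexDirX a) (-a * (3 * (a ^ 2 - 1) * sin (3 * θ) + 4 * sin θ)) θ := by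
  have h3 := ((hasDerivAt_id θ).const_mul 3).cos
  have h := ((h3.const_mul (a ^ 2 - 1)).add ((hasDerivAt_cos θ).const_mul 4)).const_mul a
  refine h.congr_deriv ?_
  simp only [id]; ring

lemma hasDerivAt_vertexDirY (θ : ℝ) :
    HasDerivAt (vertexDirY a) (3 * (a ^ 2 - 1) * cos (3 * θ) + 4 * a ^ 2 * cos θ) θ := by
  have h3 := ((hasDerivAt_id θ).const_mul 3).sin
  have h := (h3.const_mul (a ^ 2 - 1)).add ((hasDerivAt_sin θ).const_mul (4 * a ^ 2))
  refine h.congr_deriv ?_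
  simp only [id]; ring

lemma cos_three_mul_mul_cos (θ : ℝ) : cos (3 * θ) * cos θ = (cos (2 * θ) + cos (4 * θ)) / 2 := by
  rw [show 4 * θ = 3 * θ + θ by ring, show 2 * θ = 3 * θ - θ by ring, cos_add, cos_sub]; ring

lemma sin_three_mul_mul_sin (θ : ℝ) : sin (3 * θ) * sin θ = (cos (2 * θ) - cos (4 * θ)) / 2 := by
  rw [show 4 * θ = 3 * θ + θ by ring, show 2 * θ = 3 * θ - θ by ring, cos_add, cos_sub]; ring

lemma vertexDir_radial_pos (ha : 1 ≤ a) (ha4 : a ≤ 4) (θ : ℝ) :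
    0 < vertexDirX a θ * cos θ + vertexDirY a θ * sin θ := by
  have key : vertexDirX a θ * cos θ + vertexDirY a θ * sin θ
      = (a - 1) ^ 3 / 2 * (1 + cos (2 * θ)) + (a - 1) ^ 2 * (a + 1) / 2 * (1 + cos (4 * θ))
        + a * (1 + 4 * a - a ^ 2) := by
    simp only [vertexDirX, vertexDirY]
    linear_combination a * (a ^ 2 - 1) * cos_three_mul_mul_cos θ
      + (a ^ 2 - 1) * sin_three_mul_mul_sin θ + (2 * a ^ 2 - 2 * a) * cos_two_mul θ
      + 4 * a ^ 2 * sin_sq_add_cos_sq θ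
  have h₂ : 0 ≤ 1 + cos (2 * θ) := by linarith [neg_one_le_cos (2 * θ)]
  have h₄ : 0 ≤ 1 + cos (4 * θ) := by linarith [neg_one_le_cos (4 * θ)]
  have ha1 : 0 ≤ a - 1 := by linarith
  rw [key]
  have : 0 < a * (1 + 4 * a - a ^ 2) := by nlinarith
  positivity

lemma vertexDir_turn_pos (ha : 1 ≤ a) (ha' : a ^ 2 < 7 / 3) (θ : ℝ) :
    0 < vertexDirX a θ * (3 * (a ^ 2 - 1) * cos (3 * θ) + 4 * a ^ 2 * cos θ)
      - vertexDirY a θ * (-a * (3 * (a ^ 2 - 1) * sin (3 * θ) + 4 * sin θ)) := by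
  have key : vertexDirX a θ * (3 * (a ^ 2 - 1) * cos (3 * θ) + 4 * a ^ 2 * cos θ)
      - vertexDirY a θ * (-a * (3 * (a ^ 2 - 1) * sin (3 * θ) + 4 * sin θ))
      = a * (8 * (a ^ 2 - 1) * (a ^ 2 + 1) * (1 + cos (2 * θ))
        + 4 * (a ^ 2 - 1) ^ 2 * (1 - cos (4 * θ)) + (16 - 9 * (a ^ 2 - 1) ^ 2)) := by
    simp only [vertexDirX, vertexDirY]
    linear_combination 4 * a * (a ^ 2 - 1) * (a ^ 2 + 3) * cos_three_mul_mul_cos θ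
      + 4 * a * (a ^ 2 - 1) * (3 * a ^ 2 + 1) * sin_three_mul_mul_sin θ
      + 3 * a * (a ^ 2 - 1) ^ 2 * sin_sq_add_cos_sq (3 * θ) + 16 * a ^ 3 * sin_sq_add_cos_sq θ
  have h₂ : 0 ≤ 1 + cos (2 * θ) := by linarith [neg_one_le_cos (2 * θ)]
  have h₄ : 0 ≤ 1 - cos (4 * θ) := by linarith [cos_le_one (4 * θ)]
  have hu : 0 ≤ a ^ 2 - 1 := by nlinarith
  have : 0 < 16 - 9 * (a ^ 2 - 1) ^ 2 := by nlinarith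
  rw [key]
  positivity

lemma vertexDir_sq_add_sq (θ : ℝ) : vertexDirX a θ ^ 2 + vertexDirY a θ ^ 2
    = 8 * a ^ 2 * (a ^ 2 + 1) + (a ^ 2 - 1) ^ 2 * (a ^ 2 * cos (3 * θ) ^ 2 + sin (3 * θ) ^ 2) := by
  simp only [vertexDirX, vertexDirY]
  linear_combination 8 * a ^ 2 * (a ^ 2 - 1) * cos_three_mul_mul_cos θ
    + 8 * a ^ 2 * (a ^ 2 - 1) * sin_three_mul_mul_sin θ
    + 8 * a ^ 2 * (a ^ 2 - 1) * cos_two_mul θ + 16 * a ^ 4 * sin_sq_add_cos_sq θ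

end VertexDir

def vertexAngle (a : ℝ) : ℝ → ℝ := angleLift (vertexDirX a) (vertexDirY a)

def vertex (a θ : ℝ) : EuclideanSpace ℝ (Fin 2) :=
  pt2 (a * cos (vertexAngle a θ)) (sin (vertexAngle a θ))

def inscribedTri (a α : ℝ) : Set (EuclideanSpace ℝ (Fin 2)) := vertex a '' triAngles α

section Vertex

variable {a : ℝ}

lemma vertex_mem_ellipse (ha : a ≠ 0) (θ : ℝ) : vertex a θ ∈ ellipse a := by
  show (a * cos (vertexAngle a θ) / a) ^ 2 + sin (vertexAngle a θ) ^ 2 = 1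
  rw [mul_div_cancel_left₀ _ ha, cos_sq_add_sin_sq]

lemma vertex_periodic : Periodic (vertex a) (2 * π) := fun θ => by
  have := angleLift_add_int_mul_two_pi (vertexDirX_periodic (a := a))
    (vertexDirY_periodic (a := a)) θ 1
  rw [Int.cast_one, one_mul] at this
  rw [vertex, vertex, vertexAngle, this, cos_add_two_pi, sin_add_two_pi]

lemma exists_vertex_eq (ha : 1 ≤ a) (ha4 : a ≤ 4) {p : EuclideanSpace ℝ (Fin 2)}
    (hp : p ∈ ellipse a) : ∃ θ, vertex a θ = p := by
  obtain ⟨t, ht₀, ht₁⟩ := exists_eq_sqrt_mul_cos_sin (p 0 / a) (p 1)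
  rw [show (p 0 / a) ^ 2 + p 1 ^ 2 = 1 from hp, sqrt_one, one_mul] at ht₀ ht₁
  obtain ⟨θ, hθ⟩ := surjective_angleLift (f := vertexDirX a) (g := vertexDirY a)
    (by unfold vertexDirX; fun_prop) (by unfold vertexDirY; fun_prop)
    (vertexDir_radial_pos ha ha4) t
  refine ⟨θ, (eq_pt2 p).trans ?_ |>.symm⟩
  rw [vertex, vertexAngle, hθ, ← ht₁, ← ht₀, mul_div_cancel₀ _ (by positivity)]

lemma exists_int_of_vertex_eq (ha : 1 ≤ a) (ha' : a ^ 2 < 7 / 3) {θ θ' : ℝ}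
    (h : vertex a θ = vertex a θ') : ∃ n : ℤ, θ' = θ + n * (2 * π) := by
  have hmono := strictMono_angleLift (fun θ => hasDerivAt_vertexDirX (a := a) θ)
    hasDerivAt_vertexDirY (vertexDir_radial_pos ha (by nlinarith)) (vertexDir_turn_pos ha ha')
  refine exists_int_of_cos_sin_angleLift_eq vertexDirX_periodic vertexDirY_periodic hmono ?_
    (congrArg (· 1) h)
  exact mul_left_cancel₀ (by positivity) (congrArg (· 0) h)

lemma vertex_eq_pt2 (ha : 1 ≤ a) (ha4 : a ≤ 4) {ρ θ : ℝ}
    (hρ : ρ * √(vertexDirX a θ ^ 2 + vertexDirY a θ ^ 2) = 4 * a ^ 2) :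
    vertex a θ = pt2 (ρ * vertexDirX a θ / (4 * a)) (ρ * vertexDirY a θ / (4 * a ^ 2)) := by
  have hpos := vertexDir_radial_pos ha ha4 θ
  rw [vertex, vertexAngle]
  congr 1
  · rw [← sqrt_mul_cos_angleLift hpos, ← mul_assoc, hρ]; field_simp
  · rw [← sqrt_mul_sin_angleLift hpos, ← mul_assoc, hρ]; field_simp

end Vertex

section InscribedTri

variable {a c₀ c₁ ρ : ℝ}

lemma center_of_regularTri_subset_ellipse (ha : a ≠ 0) (hρ : ρ ≠ 0) {α : ℝ}
    (h : regularTri c₀ c₁ ρ α ⊆ ellipse a) :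
    4 * c₀ = ρ * (a ^ 2 - 1) * cos (3 * α) ∧ 4 * a ^ 2 * c₁ = ρ * (a ^ 2 - 1) * sin (3 * α) := by
  have hmem : ∀ θ ∈ triAngles α, (c₀ + ρ * cos θ) ^ 2 + a ^ 2 * (c₁ + ρ * sin θ) ^ 2 = a ^ 2 :=
    fun θ hθ => by
      have : ((c₀ + ρ * cos θ) / a) ^ 2 + (c₁ + ρ * sin θ) ^ 2 = 1 := h ⟨θ, hθ, rfl⟩
      field_simp at this
      linear_combination this
  have E₀ := hmem α (by simp [triAngles])
  have E₁ := hmem (α + 2 * π / 3) (by simp [triAngles])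
  have E₂ := hmem (α + 4 * π / 3) (by simp [triAngles])
  rw [cos_add_two_pi_div_three, sin_add_two_pi_div_three] at E₁
  rw [cos_add_four_pi_div_three, sin_add_four_pi_div_three] at E₂
  rw [cos_three_mul, sin_three_mul]
  have hCS := sin_sq_add_cos_sq α
  have ht := sq_sqrt (show (0 : ℝ) ≤ 3 by norm_num)
  set C := cos α
  set S := sin α
  set t := √3
  have ht0 : t ≠ 0 := by positivity
  -- `E₁ + E₂ - 2 E₀` and `E₁ - E₂` eliminate the constant Fourier mode of the three equations.
  have k₁ : 4 * (c₀ * C + a ^ 2 * c₁ * S) = ρ * (a ^ 2 - 1) * (C ^ 2 - S ^ 2) := by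
    refine mul_left_cancel₀ hρ ?_
    linear_combination (-2 / 3) * (E₁ + E₂ - 2 * E₀) + ρ ^ 2 * (S ^ 2 + a ^ 2 * C ^ 2) / 3 * ht
  have k₂ : 2 * (a ^ 2 * c₁ * C - c₀ * S) = ρ * (a ^ 2 - 1) * (C * S) := by
    refine mul_left_cancel₀ (mul_ne_zero ht0 hρ) ?_
    linear_combination E₁ - E₂
  constructor
  · linear_combination C * k₁ - 2 * S * k₂ - (4 * c₀ + 3 * ρ * (a ^ 2 - 1) * C) * hCS
  · linear_combination S * k₁ + 2 * C * k₂ - (4 * a ^ 2 * c₁ - 3 * ρ * (a ^ 2 - 1) * S) * hCS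

lemma circlePoint_eq_pt2_vertexDir (ha : a ≠ 0) {θ : ℝ}
    (h₀ : 4 * c₀ = ρ * (a ^ 2 - 1) * cos (3 * θ))
    (h₁ : 4 * a ^ 2 * c₁ = ρ * (a ^ 2 - 1) * sin (3 * θ)) :
    circlePoint c₀ c₁ ρ θ
      = pt2 (ρ * vertexDirX a θ / (4 * a)) (ρ * vertexDirY a θ / (4 * a ^ 2)) := by
  rw [circlePoint, vertexDirX, vertexDirY]
  congr 1
  · field_simp; linear_combination h₀
  · field_simp; linear_combination h₁

lemma mul_sqrt_eq_of_pt2_mem_ellipse (ha : a ≠ 0) (hρ : 0 ≤ ρ) {X Y : ℝ}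
    (h : pt2 (ρ * X / (4 * a)) (ρ * Y / (4 * a ^ 2)) ∈ ellipse a) :
    ρ * √(X ^ 2 + Y ^ 2) = 4 * a ^ 2 := by
  have h' : (ρ * X / (4 * a) / a) ^ 2 + (ρ * Y / (4 * a ^ 2)) ^ 2 = 1 := h
  refine (pow_left_inj₀ (by positivity) (by positivity) two_ne_zero).1 ?_
  rw [mul_pow, sq_sqrt (by positivity)]
  field_simp at h'
  linear_combination h'

lemma regularTri_eq_inscribedTri (ha : 1 ≤ a) (ha4 : a ≤ 4) (hρ : 0 < ρ) {α : ℝ}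
    (h : regularTri c₀ c₁ ρ α ⊆ ellipse a) : regularTri c₀ c₁ ρ α = inscribedTri a α := by
  have ha0 : a ≠ 0 := by positivity
  obtain ⟨h₀, h₁⟩ := center_of_regularTri_subset_ellipse ha0 hρ.ne' h
  refine Set.image_congr fun θ hθ => ?_
  obtain ⟨hc, hs⟩ := cos_sin_three_mul_of_mem_triAngles hθ
  have hP := circlePoint_eq_pt2_vertexDir ha0 (hc ▸ h₀) (hs ▸ h₁)
  rw [hP, vertex_eq_pt2 ha ha4 (mul_sqrt_eq_of_pt2_mem_ellipse ha0 hρ.le (hP ▸ h ⟨θ, hθ, rfl⟩))]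

lemma exists_inscribedTri_eq_regularTri (ha : 1 ≤ a) (ha4 : a ≤ 4) (α : ℝ) :
    ∃ c₀ c₁ ρ, 0 < ρ ∧ inscribedTri a α = regularTri c₀ c₁ ρ α := by
  have ha0 : a ≠ 0 := by positivity
  set R := √(vertexDirX a α ^ 2 + vertexDirY a α ^ 2)
  have hR : 0 < R := sqrt_pos.2 (sq_add_sq_pos_of_radial_pos (vertexDir_radial_pos ha ha4 α))
  refine ⟨4 * a ^ 2 / R * (a ^ 2 - 1) * cos (3 * α) / 4,
    4 * a ^ 2 / R * (a ^ 2 - 1) * sin (3 * α) / (4 * a ^ 2), 4 * a ^ 2 / R, by positivity,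
    Set.image_congr fun θ hθ => ?_⟩
  obtain ⟨hc, hs⟩ := cos_sin_three_mul_of_mem_triAngles hθ
  rw [circlePoint_eq_pt2_vertexDir ha0 (by rw [hc]; ring) (by rw [hs]; field_simp)]
  refine vertex_eq_pt2 ha ha4 ?_
  rw [vertexDir_sq_add_sq, hc, hs, ← vertexDir_sq_add_sq]
  exact div_mul_cancel₀ _ hR.ne'

lemma isInscribedEqTri_inscribedTri (ha : 1 ≤ a) (ha4 : a ≤ 4) (α : ℝ) :
    IsInscribedEqTri a (inscribedTri a α) := by
  obtain ⟨c₀, c₁, ρ, hρ, h⟩ := exists_inscribedTri_eq_regularTri ha ha4 α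
  have hsub : inscribedTri a α ⊆ ellipse a := by
    rintro _ ⟨θ, -, rfl⟩
    exact vertex_mem_ellipse (by positivity) θ
  rw [h] at hsub ⊢
  exact isInscribedEqTri_regularTri hρ hsub

lemma inscribedTri_eq_of_vertex_mem (ha : 1 ≤ a) (ha' : a ^ 2 < 7 / 3) {φ α : ℝ}
    (h : vertex a φ ∈ inscribedTri a α) : inscribedTri a φ = inscribedTri a α := by
  obtain ⟨θ, hθ, hv⟩ := h
  obtain ⟨n, rfl⟩ := exists_int_of_vertex_eq ha ha' hv
  rw [inscribedTri, image_triAngles_add_int_mul vertex_periodic,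
    image_triAngles_of_mem vertex_periodic hθ, inscribedTri]

end InscribedTri

/-- **Unique inscribed equilateral triangle** (Adamaszek–Adams–Reddy, Lemma 6.8).
Let `Y` be an ellipse of small eccentricity (`1 < a ≤ √2`) and `p ∈ Y`. Then there is a
unique equilateral triangle inscribed in `Y` having `p` as one of its vertices. -/
theorem ellipse_unique_inscribed_equilateral (a : ℝ) (ha1 : 1 < a) (ha2 : a ≤ Real.sqrt 2)
    (p : EuclideanSpace ℝ (Fin 2)) (hp : p ∈ ellipse a) :
    ∃! T : Set (EuclideanSpace ℝ (Fin 2)), IsInscribedEqTri a T ∧ p ∈ T := by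
  have ha2' : a ^ 2 ≤ 2 := by
    simpa [sq_sqrt] using pow_le_pow_left₀ (by positivity) ha2 2
  have ha4 : a ≤ 4 := by nlinarith
  obtain ⟨φ, rfl⟩ := exists_vertex_eq ha1.le ha4 hp
  refine ⟨inscribedTri a φ,
    ⟨isInscribedEqTri_inscribedTri ha1.le ha4 φ, φ, by simp [triAngles], rfl⟩, ?_⟩
  rintro T ⟨hT, hpT⟩
  obtain ⟨c₀, c₁, ρ, α, hρ, rfl⟩ := hT.exists_eq_regularTri
  rw [regularTri_eq_inscribedTri ha1.le ha4 hρ hT.1] at hpT ⊢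
  exact (inscribedTri_eq_of_vertex_mem ha1.le (by linarith) hpT).symm
end
end
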